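/- Let E be a real normed vector space, let C ⊆ E be a compact set, and let G ∈ E be a fixed goal point. Then the visibility set V = {p ∈ E : the closed segment joining p and G is disjoint from C} is an open subset of E. That is, if the goal is visible from a point p (the straight segment from p to G does not intersect the obstacle), then the goal remains visible from every point sufficiently close to p. -/
import Mathlib

/-- For a compact obstacle `C` in a real normed vector space and a fixed goal `G`,
the visibility set `{p : the closed segment from p to G is disjoint from C}` is
open: if the goal is visible from `p`, it remains visible from every point
sufficiently close to `p`. -/
theorem visibility_set_isOpen
    {E : Type*} [NormedAddCommGroup E] [NormedSpace ℝ E]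
    (C : Set E) (hC : IsCompact C) (G : E) :
    IsOpen {p : E | Disjoint (segment ℝ p G) C} := by
  rw [Metric.isOpen_iff]
  intro p hp
  obtain ⟨δ, hδ, hdisj⟩ :=
    (hp : Disjoint (segment ℝ p G) C).exists_thickenings
      (by rw [segment_eq_image]
          exact (isCompact_Icc.image (by fun_prop))) hC.isClosed
  refine ⟨δ, hδ, fun q hq => ?_⟩
  have hsub : segment ℝ q G ⊆ Metric.thickening δ (segment ℝ p G) := by
    rintro x ⟨a, b, ha, hb, hab, rfl⟩
    rw [Metric.mem_thickening_iff]
    refine ⟨a • p + b • G, ⟨a, b, ha, hb, hab, rfl⟩, ?_⟩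
    have : dist (a • q + b • G) (a • p + b • G) = a * dist q p := by
      simp [dist_eq_norm, add_sub_add_right_eq_sub, ← smul_sub, norm_smul, abs_of_nonneg ha]
    rw [this]
    calc a * dist q p ≤ 1 * dist q p := by
          exact mul_le_mul_of_nonneg_right (by linarith) dist_nonneg
      _ < δ := by simpa using hq
  exact Set.disjoint_of_subset hsub (Metric.self_subset_thickening hδ _) hdisj
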